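/- arXiv:0812.2820 — 3 statements merged into one kernel-verified Lean document; each statement's English description precedes it below -/
import Mathlib

section
/- Let n ≥ 1, let 0 ≤ k ≤ n−1, and let 0 ≤ m ≤ n. Then (k+1)·d_{n,m,k} = C(n−1,k)·C(n,k), where C(a,b) denotes the binomial coefficient; that is, the number of Dyck paths of semilength n with exactly m flaws and exactly k double descents equals the Narayana number (1/(k+1))·C(n−1,k)·C(n,k), independently of m. -/
/-- The height of a path (list of steps; `true` = up step `U`, `false` = down step `D`)
after all its steps: #U − #D. -/
def height (l : List Bool) : ℤ := (l.count true : ℤ) - (l.count false : ℤ)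

/-- `l` is a Dyck path of semilength `n`: `2n` steps ending at height `0`
(equivalently, exactly `n` up steps). It may go below the x-axis. -/
def IsDyck (n : ℕ) (l : List Bool) : Prop := l.length = 2 * n ∧ l.count true = n

/-- The number of flaws: up steps starting at negative height. -/
def flaws (l : List Bool) : ℕ :=
  ((Finset.range l.length).filter
    (fun i => l.getD i false = true ∧ height (l.take i) < 0)).card

/-- The number of peaks: positions where an up step is immediately followed by a down step. -/
def peaks (l : List Bool) : ℕ :=
  ((Finset.range (l.length - 1)).filter
    (fun i => l.getD i false = true ∧ l.getD (i + 1) false = false)).card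

/-- The number of valleys: positions where a down step is immediately followed by an up step. -/
def valleys (l : List Bool) : ℕ :=
  ((Finset.range (l.length - 1)).filter
    (fun i => l.getD i false = false ∧ l.getD (i + 1) false = true)).card

/-- The number of double ascents: positions of two consecutive up steps. -/
def dascents (l : List Bool) : ℕ :=
  ((Finset.range (l.length - 1)).filter
    (fun i => l.getD i false = true ∧ l.getD (i + 1) false = true)).card

/-- The number of double descents: positions of two consecutive down steps. -/
def ddescents (l : List Bool) : ℕ :=
  ((Finset.range (l.length - 1)).filter
    (fun i => l.getD i false = false ∧ l.getD (i + 1) false = false)).card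

/-- `p n m k`: the number of Dyck paths of semilength `n` with `m` flaws and `k` peaks. -/
noncomputable def p (n m k : ℕ) : ℕ :=
  Nat.card {l : List Bool // IsDyck n l ∧ flaws l = m ∧ peaks l = k}

/-- `v n m k`: the number of Dyck paths of semilength `n` with `m` flaws and `k` valleys. -/
noncomputable def v (n m k : ℕ) : ℕ :=
  Nat.card {l : List Bool // IsDyck n l ∧ flaws l = m ∧ valleys l = k}

/-- `a n m k`: the number of Dyck paths of semilength `n` with `m` flaws and `k` double ascents. -/
noncomputable def a (n m k : ℕ) : ℕ :=
  Nat.card {l : List Bool // IsDyck n l ∧ flaws l = m ∧ dascents l = k}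

/-- `d n m k`: the number of Dyck paths of semilength `n` with `m` flaws and `k` double descents. -/
noncomputable def d (n m k : ℕ) : ℕ :=
  Nat.card {l : List Bool // IsDyck n l ∧ flaws l = m ∧ ddescents l = k}

/-!
A path with `n` up steps is `D^a₀ U D^a₁ U ⋯ U D^aₙ` for a unique gap sequence
`(a₀, …, aₙ)`. It is a Dyck path of semilength `n` iff the gaps sum to `n`, and then it has
`n - j` double descents iff exactly `j` gaps are nonzero. Lists of length `L` with sum at most
`t` and `j` nonzero entries number `C(L, j) C(t, j)` (choose the support, then the partial sums
of the nonzero entries), so there are `C(n+1, j) C(n-1, j-1)` such gap sequences.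

These conditions are invariant under rotation of the gap sequence, and by the cycle lemma the
`n + 1` rotations have the flaw counts `0, …, n` in some order. Indeed the `i`-th up step of
the rotation starting at `r` is a flaw iff `aᵣ + ⋯ + aᵣ₊ᵢ > i` (indices mod `n + 1`). With `P`
the prefix sums of the periodic extension of the gaps, the key `K w = (n + 1) (P w - w) + w` is
`(n + 1)`-periodic because `P` gains `n` per period, it is injective on `[0, n]` because
`K w ≡ w [ZMOD n + 1]`, and the rotation starting at `r` has as many flaws as there are
`w ∈ [0, n]` with `K r < K w`. Hence rotation is a bijection from
(sequences with `m` flaws) × `Fin (n + 1)` onto all sequences, and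
`(n + 1) d_{n,m,k} = C(n+1, k+1) C(n-1, k)`.
-/

open Finset

theorem Int.mul_add_pos_iff {N x d : ℤ} (hd : 0 < d) (hdN : d < N) :
    0 < N * x + d ↔ 0 ≤ x := by
  constructor
  · intro h
    by_contra! hx
    nlinarith
  · intro hx
    nlinarith

theorem card_filter_lt_lt_of_lt {ι α : Type*} [Fintype ι] [Preorder α] [DecidableLT α]
    (f : ι → α) {r r' : ι} (h : f r < f r') : #{w | f r' < f w} < #{w | f r < f w} := by
  refine card_lt_card ((ssubset_iff_of_subset fun w hw => ?_).2 ⟨r', ?_, ?_⟩)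
  · simp only [mem_filter, mem_univ, true_and] at hw ⊢
    exact h.trans hw
  · simpa using h
  · simp

theorem existsUnique_card_filter_lt {α : Type*} [LinearOrder α] {N : ℕ} {f : Fin N → α}
    (hf : Function.Injective f) {m : ℕ} (hm : m < N) : ∃! r, #{w | f r < f w} = m := by
  have hlt (r : Fin N) : #{w | f r < f w} < N := by
    simpa using card_lt_card (filter_ssubset.2 ⟨r, mem_univ r, lt_irrefl (f r)⟩)
  let rank (r : Fin N) : Fin N := ⟨_, hlt r⟩
  have hrank : Function.Injective rank := by
    intro r r' h
    by_contra hne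
    rcases (hf.ne hne).lt_or_gt with hr | hr
    · exact (card_filter_lt_lt_of_lt f hr).ne' (congrArg Fin.val h)
    · exact (card_filter_lt_lt_of_lt f hr).ne (congrArg Fin.val h)
  obtain ⟨r, hr, huniq⟩ := (Finite.injective_iff_bijective.1 hrank).existsUnique ⟨m, hm⟩
  exact ⟨r, congrArg Fin.val hr, fun r' h => huniq r' (Fin.ext h)⟩

theorem List.getD_rotate {α : Type*} (l : List α) (r : ℕ) {j : ℕ} (hj : j < l.length)
    (x : α) :
    (l.rotate r).getD j x = l.getD ((r + j) % l.length) x := by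
  rw [List.getD_eq_getElem _ _ (by rwa [List.length_rotate]), List.getElem_rotate,
    List.getD_eq_getElem _ _ (Nat.mod_lt _ (by omega)), add_comm]

theorem List.rotate_rotate_neg {α : Type*} {l : List α} {n : ℕ} (hl : l.length = n + 1)
    (r : Fin (n + 1)) : (l.rotate r).rotate ↑(-r) = l := by
  rw [List.rotate_rotate, ← List.rotate_mod, hl, ← Fin.val_add, add_neg_cancel, Fin.val_zero,
    List.rotate_zero]

theorem Nat.sum_range_choose_eq_choose_succ (t j : ℕ) :
    ∑ b ∈ range t, b.choose j = t.choose (j + 1) := by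
  induction t with
  | zero => simp
  | succ t ih => rw [sum_range_succ, ih, Nat.choose_succ_succ', add_comm]


theorem height_cons (x : Bool) (l : List Bool) :
    height (x :: l) = (if x then 1 else -1) + height l := by
  cases x <;> simp [height] <;> ring

def flawsFrom (h : ℤ) (l : List Bool) : ℕ :=
  #{i ∈ range l.length | l.getD i false = true ∧ h + height (l.take i) < 0}

theorem flaws_eq_flawsFrom_zero (l : List Bool) : flaws l = flawsFrom 0 l := by
  simp [flaws, flawsFrom]

theorem flawsFrom_nil (h : ℤ) : flawsFrom h [] = 0 := rfl

theorem flawsFrom_cons (h : ℤ) (x : Bool) (l : List Bool) :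
    flawsFrom h (x :: l) =
      (if x = true ∧ h < 0 then 1 else 0) + flawsFrom (h + if x then 1 else -1) l := by
  simp only [flawsFrom, card_filter, List.length_cons, sum_range_succ', List.getD_cons_succ,
    List.take_succ_cons, height_cons, List.getD_cons_zero, List.take_zero]
  rw [add_comm]
  congr 1
  · simp [height]
  · refine sum_congr rfl fun i _ => ?_
    simp only [add_assoc]

theorem flawsFrom_replicate_false_append (h : ℤ) (a : ℕ) (l : List Bool) :
    flawsFrom h (List.replicate a false ++ l) = flawsFrom (h - a) l := by
  induction a generalizing h with
  | zero => simp
  | succ a ih =>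
    rw [List.replicate_succ, List.cons_append, flawsFrom_cons, ih]
    simp only [Bool.false_eq_true, false_and, if_false, zero_add]
    congr 1
    push_cast
    ring

theorem ddescents_cons (x : Bool) (l : List Bool) :
    ddescents (x :: l) = ddescents l + if x = false ∧ l.head? = some false then 1 else 0 := by
  cases l with
  | nil => simp [ddescents]
  | cons y l =>
    simp only [ddescents, card_filter, List.length_cons, Nat.add_sub_cancel, sum_range_succ',
      List.getD_cons_succ, List.getD_cons_zero, List.head?_cons, Option.some.injEq]

theorem ddescents_append_true_cons (u w : List Bool) :
    ddescents (u ++ true :: w) = ddescents u + ddescents w := by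
  induction u with
  | nil => rw [List.nil_append, ddescents_cons]; simp [ddescents]
  | cons x u ih =>
    rw [List.cons_append, ddescents_cons, ddescents_cons, ih]
    cases u <;> simp
    omega

theorem ddescents_replicate_false (a : ℕ) : ddescents (List.replicate a false) = a - 1 := by
  induction a with
  | zero => simp [ddescents]
  | succ a ih =>
    rw [List.replicate_succ, ddescents_cons, ih]
    cases a <;> simp [List.replicate_succ]

/-- `ofGaps [a₀, …, aₙ] = D^a₀ U D^a₁ U ⋯ U D^aₙ`. -/
def ofGaps : List ℕ → List Bool
  | [] => []
  | [a] => List.replicate a false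
  | a :: b :: s => List.replicate a false ++ true :: ofGaps (b :: s)

def gaps : List Bool → List ℕ
  | [] => [0]
  | true :: l => 0 :: gaps l
  | false :: l => ((gaps l).headI + 1) :: (gaps l).tail

theorem gaps_ne_nil (l : List Bool) : gaps l ≠ [] := by
  rcases l with _ | ⟨_ | _, l⟩ <;> simp [gaps]

theorem ofGaps_succ_cons (a : ℕ) (s : List ℕ) :
    ofGaps ((a + 1) :: s) = false :: ofGaps (a :: s) := by
  cases s <;> rfl

theorem ofGaps_zero_cons {s : List ℕ} (hs : s ≠ []) : ofGaps (0 :: s) = true :: ofGaps s := by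
  obtain ⟨b, s, rfl⟩ := List.exists_cons_of_ne_nil hs
  rfl

theorem ofGaps_gaps : ∀ l : List Bool, ofGaps (gaps l) = l
  | [] => rfl
  | true :: l => by rw [gaps, ofGaps_zero_cons (gaps_ne_nil l), ofGaps_gaps l]
  | false :: l => by
    obtain ⟨b, s, hbs⟩ := List.exists_cons_of_ne_nil (gaps_ne_nil l)
    rw [gaps, hbs, List.headI_cons, List.tail_cons, ofGaps_succ_cons, ← hbs, ofGaps_gaps l]

theorem gaps_replicate_false_append (a : ℕ) (l : List Bool) :
    gaps (List.replicate a false ++ l) = ((gaps l).headI + a) :: (gaps l).tail := by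
  induction a with
  | zero => obtain ⟨b, s, hbs⟩ := List.exists_cons_of_ne_nil (gaps_ne_nil l); simp [hbs]
  | succ a ih => rw [List.replicate_succ, List.cons_append, gaps, ih]; rfl

theorem gaps_ofGaps : ∀ {s : List ℕ}, s ≠ [] → gaps (ofGaps s) = s
  | [a], _ => by simpa [ofGaps, gaps] using gaps_replicate_false_append a []
  | a :: b :: s, _ => by
    rw [ofGaps, gaps_replicate_false_append, gaps, gaps_ofGaps (List.cons_ne_nil b s)]
    simp

theorem count_true_ofGaps : ∀ {s : List ℕ}, s ≠ [] → (ofGaps s).count true + 1 = s.length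
  | [a], _ => by simp [ofGaps, List.count_replicate]
  | a :: b :: s, _ => by
    simp [ofGaps, List.count_replicate, ← count_true_ofGaps (List.cons_ne_nil b s)]

theorem count_false_ofGaps : ∀ s : List ℕ, (ofGaps s).count false = s.sum
  | [] => rfl
  | [a] => by simp [ofGaps]
  | a :: b :: s => by simp [ofGaps, count_false_ofGaps (b :: s)]

theorem ddescents_ofGaps : ∀ s : List ℕ, ddescents (ofGaps s) + s.countP (· ≠ 0) = s.sum
  | [] => rfl
  | [a] => by rw [ofGaps, ddescents_replicate_false]; cases a <;> simp
  | a :: b :: s => by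
    have ih := ddescents_ofGaps (b :: s)
    rw [ofGaps, ddescents_append_true_cons, ddescents_replicate_false, List.countP_cons,
      List.sum_cons]
    cases a <;> simp at ih ⊢ <;> omega

theorem flawsFrom_ofGaps : ∀ (h : ℤ) (s : List ℕ), flawsFrom h (ofGaps s) =
    #{i ∈ range (s.length - 1) | h + i < ∑ j ∈ range (i + 1), (s.getD j 0 : ℤ)}
  | h, [] => rfl
  | h, [a] => by simpa [ofGaps, flawsFrom_nil] using flawsFrom_replicate_false_append h a []
  | h, a :: b :: s => by
    rw [ofGaps, flawsFrom_replicate_false_append, flawsFrom_cons, flawsFrom_ofGaps]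
    simp only [card_filter, List.length_cons, Nat.add_sub_cancel]
    rw [sum_range_succ' _ s.length, add_comm]
    congr 1
    · refine sum_congr rfl fun i _ => ?_
      rw [sum_range_succ' _ (i + 1)]
      simp only [List.getD_cons_succ, List.getD_cons_zero]
      refine if_congr ?_ rfl rfl
      push_cast
      omega
    · simp

def IsGapSeq (n j : ℕ) (s : List ℕ) : Prop :=
  s.length = n + 1 ∧ s.sum = n ∧ s.countP (· ≠ 0) = j

theorem IsGapSeq.rotate {n j : ℕ} {s : List ℕ} (hs : IsGapSeq n j s) (r : ℕ) :
    IsGapSeq n j (s.rotate r) := by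
  obtain ⟨hlen, hsum, hpos⟩ := hs
  exact ⟨by rw [List.length_rotate, hlen], by rw [(s.rotate_perm r).sum_eq, hsum],
    by rw [(s.rotate_perm r).countP_eq, hpos]⟩

theorem isDyck_ofGaps_and_ddescents_iff {n k : ℕ} (hk : k ≤ n) {s : List ℕ} (hs : s ≠ []) :
    IsDyck n (ofGaps s) ∧ ddescents (ofGaps s) = k ↔ IsGapSeq n (n - k) s := by
  have htrue := count_true_ofGaps hs
  have hfalse := count_false_ofGaps s
  have hdd := ddescents_ofGaps s
  have hlen := List.count_true_add_count_false (ofGaps s)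
  unfold IsDyck IsGapSeq
  omega

def dyckEquivGapSeq {n m k : ℕ} (hk : k ≤ n) :
    {l // IsDyck n l ∧ flaws l = m ∧ ddescents l = k} ≃
      {s // IsGapSeq n (n - k) s ∧ flaws (ofGaps s) = m} where
  toFun l := ⟨gaps l, by
    obtain ⟨hdyck, hflaws, hdd⟩ := l.2
    rw [← ofGaps_gaps l.1] at hdyck hflaws hdd
    exact ⟨(isDyck_ofGaps_and_ddescents_iff hk (gaps_ne_nil _)).1 ⟨hdyck, hdd⟩, hflaws⟩⟩
  invFun s := ⟨ofGaps s, by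
    have hs : s.1 ≠ [] := List.ne_nil_of_length_eq_add_one s.2.1.1
    obtain ⟨hdyck, hdd⟩ := (isDyck_ofGaps_and_ddescents_iff hk hs).2 s.2.1
    exact ⟨hdyck, s.2.2, hdd⟩⟩
  left_inv l := Subtype.ext (ofGaps_gaps l)
  right_inv s := Subtype.ext (gaps_ofGaps (List.ne_nil_of_length_eq_add_one s.2.1.1))

def cyclicPrefixSum (s : List ℕ) (i : ℕ) : ℕ := ∑ j ∈ range i, s.getD (j % s.length) 0

def cyclicKey (s : List ℕ) (i : ℕ) : ℤ := s.length * ((cyclicPrefixSum s i : ℤ) - i) + i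

theorem cyclicPrefixSum_add (s : List ℕ) (r i : ℕ) : cyclicPrefixSum s (r + i) =
    cyclicPrefixSum s r + ∑ j ∈ range i, s.getD ((r + j) % s.length) 0 :=
  sum_range_add _ r i

theorem cyclicPrefixSum_length (s : List ℕ) : cyclicPrefixSum s s.length = s.sum := by
  rw [cyclicPrefixSum, ← Fin.sum_univ_eq_sum_range, ← Fin.sum_univ_getElem]
  exact sum_congr rfl fun j _ => by rw [Nat.mod_eq_of_lt j.2, List.getD_eq_getElem]

section CycleLemma

variable {n : ℕ} {s : List ℕ}

theorem periodic_cyclicKey (hlen : s.length = n + 1) (hsum : s.sum = n) :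
    Function.Periodic (cyclicKey s) (n + 1) := by
  intro i
  have hP : cyclicPrefixSum s (i + (n + 1)) = n + cyclicPrefixSum s i := by
    rw [add_comm, ← hlen, cyclicPrefixSum_add, cyclicPrefixSum_length, hsum, cyclicPrefixSum]
    simp
  simp only [cyclicKey, hP, hlen]
  push_cast
  ring

theorem cyclicKey_injOn : Set.InjOn (cyclicKey s) {w | w < s.length} := by
  have hmod {w : ℕ} (hw : w < s.length) : cyclicKey s w % s.length = w := by
    rw [cyclicKey, add_comm, Int.add_mul_emod_self_left]
    exact Int.emod_eq_of_lt (by positivity) (by exact_mod_cast hw)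
  intro w hw w' hw' h
  exact_mod_cast (hmod hw).symm.trans (h ▸ hmod hw')

theorem flaws_ofGaps_rotate (hlen : s.length = n + 1) (r : ℕ) :
    flaws (ofGaps (s.rotate r)) =
      #{w ∈ Ico r (r + (n + 1)) | cyclicKey s r < cyclicKey s w} := by
  rw [flaws_eq_flawsFrom_zero, flawsFrom_ofGaps, List.length_rotate, hlen, Nat.add_sub_cancel,
    card_filter, card_filter, sum_Ico_eq_sum_range, Nat.add_sub_cancel_left, sum_range_succ']
  simp only [add_zero, lt_irrefl, if_false]
  refine sum_congr rfl fun i hi => if_congr ?_ rfl rfl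
  have hwindow : ∑ j ∈ range (i + 1), ((s.rotate r).getD j 0 : ℤ) =
      cyclicPrefixSum s (r + (i + 1)) - cyclicPrefixSum s r := by
    rw [cyclicPrefixSum_add]
    push_cast
    rw [add_sub_cancel_left]
    refine sum_congr rfl fun j hj => ?_
    rw [List.getD_rotate _ _ (by simp at hi hj; omega)]
  have hkey : cyclicKey s (r + (i + 1)) - cyclicKey s r = (n + 1) *
      ((cyclicPrefixSum s (r + (i + 1)) - cyclicPrefixSum s r : ℤ) - (i + 1)) + (i + 1) := by
    simp only [cyclicKey, hlen]
    push_cast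
    ring
  rw [zero_add, hwindow, ← sub_pos (b := cyclicKey s r), hkey,
    Int.mul_add_pos_iff (by positivity) (by simp at hi; omega)]
  omega

theorem flaws_ofGaps_rotate_eq_card (hlen : s.length = n + 1) (hsum : s.sum = n) (r : ℕ) :
    flaws (ofGaps (s.rotate r)) = #{w ∈ range (n + 1) | cyclicKey s r < cyclicKey s w} := by
  rw [flaws_ofGaps_rotate hlen, Nat.filter_Ico_card_eq_of_periodic _ _
    (fun w => cyclicKey s r < cyclicKey s w) ((periodic_cyclicKey hlen hsum).comp _),
    Nat.count_eq_card_filter_range]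

theorem existsUnique_flaws_ofGaps_rotate (hlen : s.length = n + 1) (hsum : s.sum = n) {m : ℕ}
    (hm : m ≤ n) : ∃! r : Fin (n + 1), flaws (ofGaps (s.rotate r)) = m := by
  have hrank (r : Fin (n + 1)) : flaws (ofGaps (s.rotate r)) =
      #{w : Fin (n + 1) | cyclicKey s r < cyclicKey s w} := by
    rw [flaws_ofGaps_rotate_eq_card hlen hsum, card_filter, card_filter,
      Fin.sum_univ_eq_sum_range (fun w => if cyclicKey s r < cyclicKey s w then 1 else 0)]
  simp only [hrank]
  refine existsUnique_card_filter_lt (f := fun w : Fin (n + 1) => cyclicKey s w) ?_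
    (Nat.lt_succ_of_le hm)
  intro w w' h
  exact Fin.ext
    (cyclicKey_injOn (by simpa [hlen] using w.is_le) (by simpa [hlen] using w'.is_le) h)

end CycleLemma

theorem card_isGapSeq_eq_card_flaws_mul {n j m : ℕ} (hm : m ≤ n) :
    Nat.card {s // IsGapSeq n j s} =
      Nat.card {s // IsGapSeq n j s ∧ flaws (ofGaps s) = m} * (n + 1) := by
  let rot (p : {s // IsGapSeq n j s ∧ flaws (ofGaps s) = m} × Fin (n + 1)) :
      {s // IsGapSeq n j s} :=
    ⟨p.1.1.rotate p.2, p.1.2.1.rotate p.2⟩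
  have hrot : Function.Bijective rot := by
    constructor
    · rintro ⟨⟨t, ht, htm⟩, r⟩ ⟨⟨t', ht', ht'm⟩, r'⟩ h
      have hu : t.rotate r = t'.rotate r' := congrArg Subtype.val h
      obtain ⟨hlen, hsum, -⟩ := ht.rotate r
      have hr : -r = -r' := (existsUnique_flaws_ofGaps_rotate hlen hsum hm).unique
        (by rwa [List.rotate_rotate_neg ht.1]) (by rwa [hu, List.rotate_rotate_neg ht'.1])
      obtain rfl := neg_injective hr
      obtain rfl := List.rotate_eq_rotate.1 hu
      rfl
    · rintro ⟨u, hu⟩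
      obtain ⟨r, hr, -⟩ := existsUnique_flaws_ofGaps_rotate hu.1 hu.2.1 hm
      exact ⟨(⟨u.rotate r, hu.rotate r, hr⟩, -r),
        Subtype.ext (List.rotate_rotate_neg hu.1 r)⟩
  rw [← Nat.card_fin (n + 1), ← Nat.card_prod]
  exact (Nat.card_congr (Equiv.ofBijective rot hrot)).symm

def boundedSeqs : ℕ → ℕ → Finset (List ℕ)
  | 0, _ => {[]}
  | L + 1, t => (range (t + 1)).biUnion fun a => (boundedSeqs L (t - a)).image (List.cons a)

theorem mem_boundedSeqs {L t : ℕ} {s : List ℕ} :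
    s ∈ boundedSeqs L t ↔ s.length = L ∧ s.sum ≤ t := by
  induction L generalizing t s with
  | zero =>
    rw [boundedSeqs, mem_singleton, List.length_eq_zero_iff]
    exact ⟨fun h => ⟨h, h ▸ t.zero_le⟩, And.left⟩
  | succ L ih =>
    cases s with
    | nil => simp [boundedSeqs]
    | cons a s => simp [boundedSeqs, ih]; omega

theorem card_filter_boundedSeqs (L t j : ℕ) :
    #{s ∈ boundedSeqs L t | s.countP (· ≠ 0) = j} = L.choose j * t.choose j := by
  induction L generalizing t j with
  | zero => cases j <;> simp [boundedSeqs, filter_singleton]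
  | succ L ih =>
    rw [boundedSeqs, filter_biUnion, card_biUnion]
    · simp_rw [filter_image, card_image_of_injective _ List.cons_injective]
      rw [sum_range_succ']
      have hzero (s : List ℕ) : (0 :: s).countP (· ≠ 0) = s.countP (· ≠ 0) :=
        List.countP_cons_of_neg (by simp)
      have hsucc (a : ℕ) (s : List ℕ) :
          ((a + 1) :: s).countP (· ≠ 0) = s.countP (· ≠ 0) + 1 :=
        List.countP_cons_of_pos (by simp)
      simp_rw [hzero, hsucc, Nat.sub_zero, ih]
      cases j with
      | zero => simp
      | succ j =>
        have hreflect : ∑ a ∈ range t, (t - (a + 1)).choose j = t.choose (j + 1) := by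
          rw [← Nat.sum_range_choose_eq_choose_succ, ← sum_range_reflect (·.choose j) t]
          exact sum_congr rfl fun a _ => by rw [Nat.sub_sub, add_comm 1 a]
        simp_rw [Nat.add_right_cancel_iff, ih, ← mul_sum, hreflect, Nat.choose_succ_succ' L j]
        ring
    · intro a _ b _ hab
      refine disjoint_left.2 fun x hxa hxb => hab ?_
      simp only [mem_filter, mem_image] at hxa hxb
      obtain ⟨⟨s, -, rfl⟩, -⟩ := hxa
      obtain ⟨⟨s', -, h⟩, -⟩ := hxb
      exact (List.cons_eq_cons.1 h).1.symm

theorem card_isGapSeq (n j : ℕ) :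
    Nat.card {s // IsGapSeq (n + 1) (j + 1) s} = (n + 2).choose (j + 1) * n.choose j := by
  set A := {s ∈ boundedSeqs (n + 2) (n + 1) | s.countP (· ≠ 0) = j + 1}
  have hmem (s : List ℕ) : IsGapSeq (n + 1) (j + 1) s ↔ s ∈ {s ∈ A | s.sum = n + 1} := by
    simp only [IsGapSeq, A, mem_filter, mem_boundedSeqs]
    omega
  have hlower : {s ∈ A | s.sum ≠ n + 1} =
      {s ∈ boundedSeqs (n + 2) n | s.countP (· ≠ 0) = j + 1} := by
    ext s
    simp only [A, mem_filter, mem_boundedSeqs]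
    omega
  have hsplit := card_filter_add_card_filter_not (s := A) (fun s => s.sum = n + 1)
  rw [hlower, card_filter_boundedSeqs, card_filter_boundedSeqs, Nat.choose_succ_succ' n,
    mul_add] at hsplit
  rw [Nat.card_congr (Equiv.subtypeEquivRight hmem), Nat.card_eq_finsetCard]
  omega

/-- Chung-Feller theorem for double descents: `(k+1) d_{n,m,k} = C(n-1,k) C(n,k)`,
i.e. `d_{n,m,k}` is the Narayana number, independently of `m`. -/
theorem ddescent_chung_feller (n m k : ℕ) (hn : 1 ≤ n) (hk : k ≤ n - 1) (hm : m ≤ n) :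
    (k + 1) * d n m k = Nat.choose (n - 1) k * Nat.choose n k := by
  obtain ⟨n, rfl⟩ : ∃ n', n = n' + 1 := ⟨n - 1, by omega⟩
  obtain ⟨j, hj⟩ : ∃ j, n + 1 - k = j + 1 := ⟨n - k, by omega⟩
  have hcycle : d (n + 1) m k * (n + 2) = (n + 2).choose (k + 1) * n.choose k := by
    rw [d, Nat.card_congr (dyckEquivGapSeq (by omega)), ← card_isGapSeq_eq_card_flaws_mul hm, hj,
      card_isGapSeq, Nat.choose_symm_of_eq_add (show n + 2 = j + 1 + (k + 1) by omega),
      Nat.choose_symm_of_eq_add (show n = j + k by omega)]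
  apply Nat.eq_of_mul_eq_mul_right (show 0 < n + 2 by omega)
  calc (k + 1) * d (n + 1) m k * (n + 2) = (n + 2).choose (k + 1) * (k + 1) * n.choose k := by
        rw [mul_assoc, hcycle]; ring
    _ = n.choose k * (n + 1).choose k * (n + 2) := by
        rw [← Nat.add_one_mul_choose_eq]; ring
end

section
/- For every n ≥ 0, every m with 0 ≤ m ≤ n, and every k ≥ 0, the number of Dyck paths of semilength n with exactly m flaws and exactly k peaks equals the number of Dyck paths of semilength n with exactly n−m flaws and exactly k valleys; that is, p_{n,m,k} = v_{n,n−m,k}. (The bijection sends each step to its opposite step.) -/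
/-!
Complementing every step is an involution on Dyck paths of semilength `n` which exchanges
peaks and valleys and turns flaws into *antiflaws*, down steps starting at positive height.
Along a path, `flaws + antiflaws` and `#D + min height 0` both increase by one exactly at the
up steps starting below the axis and the down steps starting above it, so they agree; for a
Dyck path of semilength `n` the latter is `n`.
-/

def antiflaws (l : List Bool) : ℕ :=
  ((Finset.range l.length).filter
    (fun i => l.getD i false = false ∧ 0 < height (l.take i))).card

theorem card_filter_range_length_append_singleton {α : Type*} (P : List α → α → Prop)
    [∀ u x, Decidable (P u x)] (x₀ : α) (l : List α) (s : α) :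
    ((Finset.range (l ++ [s]).length).filter
        (fun i => P ((l ++ [s]).take i) ((l ++ [s]).getD i x₀))).card =
      ((Finset.range l.length).filter (fun i => P (l.take i) (l.getD i x₀))).card +
        if P l s then 1 else 0 := by
  have hprefix : (Finset.range l.length).filter
      (fun i => P ((l ++ [s]).take i) ((l ++ [s]).getD i x₀)) =
      (Finset.range l.length).filter (fun i => P (l.take i) (l.getD i x₀)) := by
    refine Finset.filter_congr fun i hi => ?_
    rw [Finset.mem_range] at hi
    rw [List.getD_append _ _ _ _ hi, List.take_append_of_le_length hi.le]
  rw [List.length_append, List.length_singleton, Finset.range_add_one, Finset.filter_insert,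
    hprefix, List.take_left, List.getD_append_right _ _ _ _ le_rfl, Nat.sub_self,
    List.getD_cons_zero]
  split_ifs
  · rw [Finset.card_insert_of_notMem (by simp)]
  · simp

theorem height_append_singleton (l : List Bool) (s : Bool) :
    height (l ++ [s]) = height l + if s then 1 else -1 := by
  cases s <;> simp [height, List.count_append] <;> ring

theorem flaws_append_singleton (l : List Bool) (s : Bool) :
    flaws (l ++ [s]) = flaws l + if s = true ∧ height l < 0 then 1 else 0 :=
  card_filter_range_length_append_singleton (fun u x => x = true ∧ height u < 0) false l s

theorem antiflaws_append_singleton (l : List Bool) (s : Bool) :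
    antiflaws (l ++ [s]) = antiflaws l + if s = false ∧ 0 < height l then 1 else 0 :=
  card_filter_range_length_append_singleton (fun u x => x = false ∧ 0 < height u) false l s

theorem flaws_add_antiflaws (l : List Bool) :
    (flaws l : ℤ) + antiflaws l = l.count false + min (height l) 0 := by
  induction l using List.reverseRecOn with
  | nil => simp [flaws, antiflaws, height]
  | append_singleton l s ih =>
    rw [flaws_append_singleton, antiflaws_append_singleton, height_append_singleton,
      List.count_append]
    cases s <;> simp only [Bool.false_eq_true, Bool.true_eq_false, true_and, false_and,
      if_true, if_false, List.count_singleton, BEq.rfl, Bool.true_beq] <;>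
      push_cast <;> split_ifs <;> omega

theorem count_map_not (l : List Bool) (b : Bool) : (l.map not).count b = l.count (!b) := by
  simpa using List.count_map_of_injective l not Bool.not_injective (!b)

theorem height_map_not (l : List Bool) : height (l.map not) = -height l := by
  simp only [height, count_map_not, Bool.not_true, Bool.not_false]
  ring

theorem getD_map_not {l : List Bool} {i : ℕ} (h : i < l.length) :
    (l.map not).getD i false = !l.getD i false := by
  simp [h]

theorem flaws_map_not (l : List Bool) : flaws (l.map not) = antiflaws l := by
  unfold flaws antiflaws
  rw [List.length_map]
  refine congrArg Finset.card (Finset.filter_congr fun i hi => ?_)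
  rw [getD_map_not (Finset.mem_range.mp hi), ← List.map_take, height_map_not]
  simp only [Bool.not_eq_true', neg_lt_zero]

theorem valleys_map_not (l : List Bool) : valleys (l.map not) = peaks l := by
  unfold valleys peaks
  rw [List.length_map]
  refine congrArg Finset.card (Finset.filter_congr fun i hi => ?_)
  rw [Finset.mem_range] at hi
  rw [getD_map_not (by omega : i < l.length), getD_map_not (by omega : i + 1 < l.length)]
  simp only [Bool.not_eq_false', Bool.not_eq_true']

theorem IsDyck.count_false {n : ℕ} {l : List Bool} (h : IsDyck n l) : l.count false = n := by
  obtain ⟨hlength, htrue⟩ := h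
  -- the ascription aligns the `BEq Bool` instance with the one in `IsDyck`, for `omega`
  have : l.count true + l.count false = l.length := List.count_true_add_count_false l
  omega

theorem IsDyck.map_not {n : ℕ} {l : List Bool} (h : IsDyck n l) : IsDyck n (l.map not) :=
  ⟨(List.length_map _).trans h.1, (count_map_not l true).trans h.count_false⟩

theorem isDyck_map_not_iff {n : ℕ} {l : List Bool} : IsDyck n (l.map not) ↔ IsDyck n l :=
  ⟨fun h => Bool.involutive_not.list_map l ▸ h.map_not, IsDyck.map_not⟩

theorem IsDyck.flaws_add_flaws_map_not {n : ℕ} {l : List Bool} (h : IsDyck n l) :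
    flaws l + flaws (l.map not) = n := by
  have hheight : height l = 0 := by simp [height, h.2, h.count_false]
  have := flaws_add_antiflaws l
  rw [hheight, h.count_false, min_self, add_zero] at this
  rw [flaws_map_not]
  omega

/-- `p_{n,m,k} = v_{n,n-m,k}` (via the step-complementation bijection). -/
theorem peak_valley_flip (n m k : ℕ) (hm : m ≤ n) : p n m k = v n (n - m) k := by
  refine Nat.card_congr ((Bool.involutive_not.list_map.toPerm _).subtypeEquiv fun l => ?_)
  simp only [Function.Involutive.coe_toPerm, isDyck_map_not_iff, valleys_map_not]
  refine and_congr_right fun hl => and_congr_left fun _ => ?_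
  have := hl.flaws_add_flaws_map_not
  omega
end

section
/- For n ≥ 0 and 0 ≤ m ≤ n, let P_{n,m}(x) = Σ_{k≥0} p_{n,m,k} x^k ∈ ℤ[x], so P_{0,0}(x) = 1. Then for every m ≥ 0 and every r ≥ 1: P_{m+r,m}(x) = x · Σ_{i=0}^{m} Σ_{j=0}^{r−1} P_{m−i,m−i}(x) · P_{r−1−j,r−1−j}(x) · P_{i+j,i}(x). -/
/-- `P_{n,m}(x) = Σ_k p_{n,m,k} x^k` (all peak counts are `≤ n < 2n+1`, so the finite sum
captures every nonzero term). -/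
noncomputable def Ppoly (n m : ℕ) : Polynomial ℤ :=
  ∑ k ∈ Finset.range (2 * n + 1), Polynomial.C (p n m k : ℤ) * Polynomial.X ^ k

/-!
A path `w` of semilength `m + r` with `m < m + r` flaws has an up step that is not a flaw, so it
rises above the axis. Cut it at its last down step from height `1` to `0` and at the last up step
from `0` to `1` before that: `w = A U B D C`, where `B` never goes below the axis, `C` never goes
above it, and `A` is any path ending at height `0`. This decomposition is unique. No up step
of `U B D` is a flaw and every up step of `C` is, so `flaws w` is `flaws A` plus the semilength
of `C`, while
`peaks w = peaks A + valleys B + 1 + peaks C`. Reflecting `B` into a path `E` that never goes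
above the axis (equivalently, all of whose up steps are flaws) turns `valleys B` into `peaks E`;
with `i = flaws A` and `i + j` the semilength of `A` this is the recurrence.
-/

namespace DyckPath

section Paths

open List

lemma height_append (u w : List Bool) : height (u ++ w) = height u + height w := by
  simp only [height, count_append]; push_cast; ring

@[simp] lemma height_nil : height [] = 0 := rfl

@[simp] lemma height_cons_true (t : List Bool) : height (true :: t) = 1 + height t :=
  height_append [true] t

@[simp] lemma height_cons_false (t : List Bool) : height (false :: t) = -1 + height t :=
  height_append [false] t

lemma height_cons (a : Bool) (t : List Bool) :
    height (a :: t) = (if a then 1 else -1) + height t := by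
  cases a <;> simp

lemma height_map_not (l : List Bool) : height (l.map not) = -height l := by
  induction l with
  | nil => rfl
  | cons a t ih =>
    cases a <;> simp only [map_cons, Bool.not_true, Bool.not_false, height_cons_true,
      height_cons_false, ih] <;> ring

lemma isDyck_iff_length_height {n : ℕ} {l : List Bool} :
    IsDyck n l ↔ l.length = 2 * n ∧ height l = 0 := by
  unfold IsDyck height
  have := count_true_add_count_false l
  omega

lemma IsDyck.height_eq_zero {n : ℕ} {l : List Bool} (hl : IsDyck n l) : height l = 0 :=
  (isDyck_iff_length_height.1 hl).2

lemma isDyck_count_of_height_eq_zero {l : List Bool} (hl : height l = 0) :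
    IsDyck (l.count true) l := by
  unfold IsDyck
  unfold height at hl
  have := count_true_add_count_false l
  omega

def StaysNonneg (l : List Bool) : Prop := ∀ k, 0 ≤ height (l.take k)

def StaysNonpos (l : List Bool) : Prop := ∀ k, height (l.take k) ≤ 0

lemma staysNonneg_map_not {l : List Bool} : StaysNonneg (l.map not) ↔ StaysNonpos l := by
  simp only [StaysNonneg, StaysNonpos, ← map_take, height_map_not, neg_nonneg]

lemma staysNonpos_map_not {l : List Bool} : StaysNonpos (l.map not) ↔ StaysNonneg l := by
  simp only [StaysNonneg, StaysNonpos, ← map_take, height_map_not, neg_nonpos]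

def flawsFrom (h : ℤ) : List Bool → ℕ
  | [] => 0
  | a :: t => (if a = true ∧ h < 0 then 1 else 0) + flawsFrom (h + height [a]) t

lemma flaws_eq_flawsFrom (l : List Bool) : flaws l = flawsFrom 0 l := by
  suffices key : ∀ (l : List Bool) (h : ℤ),
      ((Finset.range l.length).filter
        (fun i => l.getD i false = true ∧ h + height (l.take i) < 0)).card = flawsFrom h l by
    simpa [flaws] using key l 0
  intro l
  induction l with
  | nil => simp [flawsFrom]
  | cons a t ih =>
    intro h
    rw [Finset.card_filter, length_cons, Finset.sum_range_succ', ← Finset.card_filter]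
    simp only [getD_cons_succ, getD_cons_zero, take_succ_cons, take_zero, height_cons,
      ← add_assoc, flawsFrom, height_nil, add_zero]
    rw [ih]
    omega

lemma flawsFrom_append (h : ℤ) (u w : List Bool) :
    flawsFrom h (u ++ w) = flawsFrom h u + flawsFrom (h + height u) w := by
  induction u generalizing h with
  | nil => simp [flawsFrom]
  | cons a t ih => cases a <;> simp [flawsFrom, ih, add_assoc]

lemma flawsFrom_le_count (h : ℤ) (l : List Bool) : flawsFrom h l ≤ l.count true := by
  induction l generalizing h with
  | nil => simp [flawsFrom]
  | cons a t ih =>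
    have := ih (h + height [a])
    unfold flawsFrom
    split_ifs with ha
    · obtain ⟨rfl, -⟩ := ha
      rw [count_cons_self]; omega
    · rw [count_cons]; omega

lemma flawsFrom_eq_zero (h : ℤ) (l : List Bool) (hl : ∀ k, 0 ≤ h + height (l.take k)) :
    flawsFrom h l = 0 := by
  induction l generalizing h with
  | nil => rfl
  | cons a t ih =>
    have h0 := hl 0
    simp only [take_zero, height_nil, add_zero] at h0
    have : ¬ h < 0 := by omega
    simp only [flawsFrom, this, and_false, if_false, zero_add]
    exact ih _ fun k => by simpa [height_cons, add_assoc] using hl (k + 1)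

/-- The first step above height `0` would be an up step from `0`, which is not a flaw. -/
lemma flawsFrom_eq_count_iff {h : ℤ} (hh : h ≤ 0) (l : List Bool) :
    flawsFrom h l = l.count true ↔ ∀ k, h + height (l.take k) ≤ 0 := by
  induction l generalizing h with
  | nil => simpa [flawsFrom] using hh
  | cons a t ih =>
    rw [← Nat.and_forall_add_one]
    simp only [take_zero, height_nil, add_zero, hh, true_and, take_succ_cons]
    cases a with
    | false =>
      simp only [flawsFrom, Bool.false_eq_true, false_and, ↓reduceIte, height_cons_false,
        height_nil, add_zero, zero_add, count_cons_of_ne Bool.false_ne_true]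
      rw [ih (by omega)]
      simp only [add_assoc]
    | true =>
      simp only [flawsFrom, true_and, height_cons_true, height_nil, add_zero, count_cons_self]
      by_cases hneg : h < 0
      · rw [if_pos hneg, add_comm 1, Nat.add_right_cancel_iff, ih (by omega)]
        simp only [add_assoc]
      · have := flawsFrom_le_count (h + 1) t
        refine iff_of_false (by simp only [if_neg hneg]; omega) fun hall => ?_
        have := hall 0
        rw [take_zero, height_nil] at this
        omega

def adjacentCount (q : Bool → Bool → Prop) [DecidableRel q] (l : List Bool) : ℕ :=
  ((Finset.range (l.length - 1)).filter (fun i => q (l.getD i false) (l.getD (i + 1) false))).card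

lemma peaks_eq_adjacentCount : peaks = adjacentCount (fun a b => a = true ∧ b = false) := rfl

lemma valleys_eq_adjacentCount : valleys = adjacentCount (fun a b => a = false ∧ b = true) := rfl

section adjacentCount

variable (q : Bool → Bool → Prop) [DecidableRel q]

@[simp] lemma adjacentCount_nil : adjacentCount q [] = 0 := rfl

@[simp] lemma adjacentCount_singleton (a : Bool) : adjacentCount q [a] = 0 := rfl

lemma adjacentCount_cons_cons (a b : Bool) (t : List Bool) :
    adjacentCount q (a :: b :: t) = (if q a b then 1 else 0) + adjacentCount q (b :: t) := by
  simp only [adjacentCount, Finset.card_filter, length_cons, Nat.add_sub_cancel,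
    Finset.sum_range_succ' _ (t.length), getD_cons_succ, getD_cons_zero]
  omega

variable {q}

lemma adjacentCount_cons_of_forall_not {a : Bool} (ha : ∀ b, ¬ q a b) (l : List Bool) :
    adjacentCount q (a :: l) = adjacentCount q l := by
  cases l with
  | nil => rfl
  | cons b t => simp [adjacentCount_cons_cons, ha]

lemma adjacentCount_append_singleton_of_forall_not {b : Bool} (hb : ∀ a, ¬ q a b)
    (l : List Bool) : adjacentCount q (l ++ [b]) = adjacentCount q l := by
  induction l with
  | nil => rfl
  | cons a t ih =>
    cases t with
    | nil => simp [adjacentCount_cons_cons, hb]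
    | cons c t => simp only [cons_append, adjacentCount_cons_cons] at ih ⊢; rw [ih]

variable (q)

lemma adjacentCount_append_cons (u : List Bool) (b : Bool) (w : List Bool) :
    adjacentCount q (u ++ b :: w) = adjacentCount q (u ++ [b]) + adjacentCount q (b :: w) := by
  induction u with
  | nil => simp
  | cons a t ih =>
    cases t with
    | nil => simp [adjacentCount_cons_cons]
    | cons c t => simp only [cons_append, adjacentCount_cons_cons] at ih ⊢; rw [ih]; ring

end adjacentCount

lemma valleys_map_not (l : List Bool) : valleys (l.map not) = peaks l := by
  induction l with
  | nil => rfl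
  | cons a t ih =>
    cases t with
    | nil => rfl
    | cons b t =>
      rw [map_cons, map_cons, valleys_eq_adjacentCount, adjacentCount_cons_cons, ← map_cons,
        ← valleys_eq_adjacentCount, ih, peaks_eq_adjacentCount, adjacentCount_cons_cons]
      cases a <;> cases b <;> rfl

/-- A path that ends with a down step has one more peak than valleys, except that a
leading down step contributes a valley without a peak. -/
lemma peaks_cons_append_false (a : Bool) (l : List Bool) :
    peaks (a :: (l ++ [false])) + (if a then 0 else 1) = valleys (a :: l) + 1 := by
  induction l generalizing a with
  | nil => cases a <;> rfl
  | cons b t ih =>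
    have := ih b
    simp only [cons_append, valleys_eq_adjacentCount, peaks_eq_adjacentCount,
      adjacentCount_cons_cons] at this ⊢
    cases a <;> cases b <;>
      simp only [Bool.false_eq_true, Bool.true_eq_false, ↓reduceIte, and_true, and_false, and_self,
        add_zero, zero_add] at this ⊢ <;> omega

lemma peaks_append_up_down (A B C : List Bool) :
    peaks (A ++ true :: (B ++ false :: C)) = peaks A + valleys B + peaks C + 1 := by
  have hA : peaks (A ++ [true]) = peaks A := by
    rw [peaks_eq_adjacentCount]; exact adjacentCount_append_singleton_of_forall_not (by simp) A
  have hC : peaks (false :: C) = peaks C := by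
    rw [peaks_eq_adjacentCount]; exact adjacentCount_cons_of_forall_not (by simp) C
  have hB : peaks (true :: (B ++ [false])) = valleys B + 1 := by
    have := peaks_cons_append_false true B
    rwa [valleys_eq_adjacentCount, adjacentCount_cons_of_forall_not (by simp)] at this
  calc peaks (A ++ true :: (B ++ false :: C))
      = peaks (A ++ [true]) + peaks ((true :: B) ++ false :: C) := by
        rw [peaks_eq_adjacentCount, adjacentCount_append_cons, cons_append]
    _ = peaks A + (peaks (true :: (B ++ [false])) + peaks (false :: C)) := by
        rw [hA, peaks_eq_adjacentCount, adjacentCount_append_cons, cons_append]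
    _ = peaks A + valleys B + peaks C + 1 := by rw [hB, hC]; ring

lemma exists_last_up_crossing (c : ℤ) (w : List Bool) (hend : height w = c + 1)
    (hlow : ∃ k, height (w.take k) ≤ c) :
    ∃ A B, w = A ++ true :: B ∧ height A = c ∧ StaysNonneg B := by
  induction w generalizing c with
  | nil =>
    obtain ⟨k, hk⟩ := hlow
    rw [take_nil, height_nil] at hk
    rw [height_nil] at hend
    omega
  | cons a t ih =>
    have hcons : ∀ l, height (a :: l) = height [a] + height l := height_append [a]
    by_cases hrest : ∃ k, height (t.take k) ≤ c - height [a]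
    · obtain ⟨A, B, rfl, hA, hB⟩ := ih _ (by rw [hcons] at hend; omega) hrest
      exact ⟨a :: A, B, rfl, by rw [hcons, hA]; ring, hB⟩
    · push Not at hrest
      obtain ⟨k, hk⟩ := hlow
      have hc : 0 ≤ c := by
        cases k with
        | zero => simpa using hk
        | succ k => rw [take_succ_cons, hcons] at hk; linarith [hrest k]
      have h0 : c < height [a] := by simpa using hrest 0
      cases a with
      | false => rw [height_cons_false, height_nil] at h0; omega
      | true =>
        rw [height_cons_true, height_nil] at h0
        refine ⟨[], t, rfl, by rw [height_nil]; omega, fun k => ?_⟩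
        have := hrest k
        rw [height_cons_true, height_nil] at this
        omega

lemma eq_of_append_up_eq {A B A' B' : List Bool} (h : A ++ true :: B = A' ++ true :: B')
    (hA : height A = height A') (hB : StaysNonneg B) (hB' : StaysNonneg B') :
    A = A' ∧ B = B' := by
  rcases append_eq_append_iff.1 h with ⟨M, rfl, hM⟩ | ⟨M, rfl, hM⟩
  · cases M with
    | nil => simpa using hM
    | cons x M =>
      obtain ⟨rfl, rfl⟩ := cons_eq_cons.1 hM
      have := hB M.length
      rw [append_eq, take_left] at this
      rw [height_append, height_cons_true] at hA
      omega
  · cases M with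
    | nil => simpa using hM.symm
    | cons x M =>
      obtain ⟨rfl, rfl⟩ := cons_eq_cons.1 hM
      have := hB' M.length
      rw [append_eq, take_left] at this
      rw [height_append, height_cons_true] at hA
      omega

lemma exists_append_up_down {w : List Bool} (hw : height w = 0)
    (hpos : ∃ k, 0 < height (w.take k)) :
    ∃ A B C, w = A ++ true :: (B ++ false :: C) ∧ height A = 0 ∧ height B = 0 ∧
      StaysNonneg B ∧ StaysNonpos C := by
  obtain ⟨k, hk⟩ := hpos
  obtain ⟨P, D, hwPD, hP, hD⟩ := exists_last_up_crossing (-1) (w.map not)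
    (by simp [height_map_not, hw]) ⟨k, by rw [← map_take, height_map_not]; omega⟩
  have hw' : w = P.map not ++ false :: D.map not := by
    simpa [Function.comp_def] using congrArg (map not) hwPD
  obtain ⟨A, B, hPAB, hA, hB⟩ := exists_last_up_crossing 0 (P.map not)
    (by simp [height_map_not, hP]) ⟨0, by simp⟩
  have hBh : height B = 0 := by
    have := congrArg height hPAB
    rw [height_map_not, hP, height_append, height_cons_true, hA] at this
    omega
  exact ⟨A, B, D.map not, by rw [hw', hPAB]; simp, hA, hBh, hB, staysNonpos_map_not.2 hD⟩

lemma eq_of_append_up_down_eq {A B C A' B' C' : List Bool}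
    (h : A ++ true :: (B ++ false :: C) = A' ++ true :: (B' ++ false :: C'))
    (hA : height A = 0) (hA' : height A' = 0) (hB : height B = 0) (hB' : height B' = 0)
    (hBn : StaysNonneg B) (hBn' : StaysNonneg B') (hC : StaysNonpos C) (hC' : StaysNonpos C') :
    A = A' ∧ B = B' ∧ C = C' := by
  have hmap : (A ++ true :: B).map not ++ true :: C.map not =
      (A' ++ true :: B').map not ++ true :: C'.map not := by
    simpa using congrArg (map not) h
  obtain ⟨hAB, hCC⟩ := eq_of_append_up_eq hmap
    (by simp [height_map_not, height_append, hA, hA', hB, hB'])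
    (staysNonneg_map_not.2 hC) (staysNonneg_map_not.2 hC')
  have hinj : Function.Injective (map not) := map_injective_iff.2 Bool.involutive_not.injective
  obtain ⟨rfl, rfl⟩ := eq_of_append_up_eq (hinj hAB) (hA.trans hA'.symm) hBn hBn'
  exact ⟨rfl, rfl, hinj hCC⟩

end Paths

open Finset

lemma flaws_le_count (l : List Bool) : flaws l ≤ l.count true :=
  flaws_eq_flawsFrom l ▸ flawsFrom_le_count 0 l

lemma flaws_eq_count_iff (l : List Bool) : flaws l = l.count true ↔ StaysNonpos l := by
  simpa [flaws_eq_flawsFrom, StaysNonpos] using flawsFrom_eq_count_iff le_rfl l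

lemma flaws_append_up_down {A B : List Bool} (C : List Bool) (hA : height A = 0)
    (hB : height B = 0) (hBn : StaysNonneg B) :
    flaws (A ++ true :: (B ++ false :: C)) = flaws A + flaws C := by
  have hB0 : flawsFrom 1 B = 0 := flawsFrom_eq_zero 1 B fun k => by have := hBn k; omega
  simp [flaws_eq_flawsFrom, flawsFrom_append, flawsFrom, hA, hB, hB0]

noncomputable def dyckPaths (n m : ℕ) : Finset (List Bool) :=
  (List.finite_length_eq Bool (2 * n)).toFinset.filter fun l => l.count true = n ∧ flaws l = m

lemma mem_dyckPaths {n m : ℕ} {l : List Bool} : l ∈ dyckPaths n m ↔ IsDyck n l ∧ flaws l = m := by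
  simp [dyckPaths, IsDyck, and_assoc]

lemma mem_dyckPaths_self {n : ℕ} {l : List Bool} :
    l ∈ dyckPaths n n ↔ IsDyck n l ∧ StaysNonpos l := by
  rw [mem_dyckPaths, ← flaws_eq_count_iff]
  exact ⟨fun ⟨hl, hf⟩ => ⟨hl, hf.trans hl.2.symm⟩, fun ⟨hl, hf⟩ => ⟨hl, hf.trans hl.2⟩⟩

lemma height_eq_zero_of_mem_dyckPaths {n m : ℕ} {l : List Bool} (hl : l ∈ dyckPaths n m) :
    height l = 0 :=
  IsDyck.height_eq_zero (mem_dyckPaths.1 hl).1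

lemma Ppoly_eq_sum (n m : ℕ) :
    Ppoly n m = ∑ l ∈ dyckPaths n m, (Polynomial.X : Polynomial ℤ) ^ peaks l := by
  have hmaps : ∀ l ∈ dyckPaths n m, peaks l ∈ range (2 * n + 1) := by
    intro l hl
    have hpeaks : peaks l ≤ l.length - 1 := (card_filter_le _ _).trans (card_range _).le
    have hlen := (mem_dyckPaths.1 hl).1.1
    rw [mem_range]
    omega
  rw [← sum_fiberwise_of_maps_to hmaps, Ppoly]
  refine sum_congr rfl fun k _ => ?_
  have hp : p n m k = #{l ∈ dyckPaths n m | peaks l = k} := by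
    rw [p, ← Nat.card_eq_finsetCard]
    exact Nat.card_congr (Equiv.subtypeEquivRight fun l => by simp [mem_dyckPaths, and_assoc])
  rw [sum_congr rfl fun l hl => by rw [(mem_filter.1 hl).2], sum_const, hp, nsmul_eq_mul]
  simp

/-- `⟨(i, j), C, E, A⟩` indexes the term `P_{m-i,m-i} P_{r-1-j,r-1-j} P_{i+j,i}` of the
recurrence with one path from each factor. -/
abbrev GluingDatum := (_ : ℕ × ℕ) × List Bool × List Bool × List Bool

/-- The path `A U B D C`, where `B` is the reflection of `E`. -/
def GluingDatum.glue (q : GluingDatum) : List Bool :=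
  q.2.2.2 ++ true :: (q.2.2.1.map not ++ false :: q.2.1)

lemma GluingDatum.peaks_glue (q : GluingDatum) :
    peaks q.glue = peaks q.2.1 + peaks q.2.2.1 + peaks q.2.2.2 + 1 := by
  rw [glue, peaks_append_up_down, valleys_map_not]; ring

noncomputable def gluingData (m r : ℕ) : Finset GluingDatum :=
  (range (m + 1) ×ˢ range r).sigma fun ij =>
    dyckPaths (m - ij.1) (m - ij.1) ×ˢ dyckPaths (r - 1 - ij.2) (r - 1 - ij.2) ×ˢ
      dyckPaths (ij.1 + ij.2) ij.1

lemma mem_gluingData {m r i j : ℕ} {C E A : List Bool} :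
    ⟨(i, j), C, E, A⟩ ∈ gluingData m r ↔ i ≤ m ∧ j < r ∧ C ∈ dyckPaths (m - i) (m - i) ∧
      E ∈ dyckPaths (r - 1 - j) (r - 1 - j) ∧ A ∈ dyckPaths (i + j) i := by
  simp [gluingData, and_assoc]

lemma glue_mem_dyckPaths {m r : ℕ} {q : GluingDatum} (hq : q ∈ gluingData m r) :
    q.glue ∈ dyckPaths (m + r) m := by
  obtain ⟨⟨i, j⟩, C, E, A⟩ := q
  obtain ⟨hi, hj, hC, hE, hA⟩ := mem_gluingData.1 hq
  obtain ⟨hCd, hCf⟩ := mem_dyckPaths.1 hC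
  obtain ⟨hEd, hEn⟩ := mem_dyckPaths_self.1 hE
  obtain ⟨hAd, hAf⟩ := mem_dyckPaths.1 hA
  rw [isDyck_iff_length_height] at hCd hEd hAd
  have hEh : height (E.map not) = 0 := by rw [height_map_not, hEd.2, neg_zero]
  refine mem_dyckPaths.2 ⟨isDyck_iff_length_height.2 ⟨?_, ?_⟩, ?_⟩
  · simp only [GluingDatum.glue, List.length_append, List.length_cons, List.length_map, hCd.1,
      hEd.1, hAd.1]
    omega
  · simp [GluingDatum.glue, height_append, hCd.2, hEh, hAd.2]
  · rw [GluingDatum.glue, flaws_append_up_down C hAd.2 hEh (staysNonneg_map_not.2 hEn), hAf, hCf]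
    omega

lemma glue_injOn (m r : ℕ) : Set.InjOn GluingDatum.glue (gluingData m r) := by
  rintro ⟨⟨i, j⟩, C, E, A⟩ hq ⟨⟨i', j'⟩, C', E', A'⟩ hq' h
  obtain ⟨-, -, hC, hE, hA⟩ := mem_gluingData.1 hq
  obtain ⟨-, -, hC', hE', hA'⟩ := mem_gluingData.1 hq'
  simp only [GluingDatum.glue] at h
  have hEh : ∀ {t : ℕ} {E : List Bool}, E ∈ dyckPaths t t → height (E.map not) = 0 :=
    fun hE => by rw [height_map_not, height_eq_zero_of_mem_dyckPaths hE, neg_zero]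
  have hEn : ∀ {t : ℕ} {E : List Bool}, E ∈ dyckPaths t t → StaysNonneg (E.map not) :=
    fun hE => staysNonneg_map_not.2 (mem_dyckPaths_self.1 hE).2
  obtain ⟨rfl, hEE, rfl⟩ := eq_of_append_up_down_eq h
    (height_eq_zero_of_mem_dyckPaths hA) (height_eq_zero_of_mem_dyckPaths hA')
    (hEh hE) (hEh hE') (hEn hE) (hEn hE')
    (mem_dyckPaths_self.1 hC).2 (mem_dyckPaths_self.1 hC').2
  obtain rfl := List.map_injective_iff.2 Bool.involutive_not.injective hEE
  obtain ⟨⟨-, hAc⟩, hAf⟩ := mem_dyckPaths.1 hA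
  obtain ⟨⟨-, hAc'⟩, hAf'⟩ := mem_dyckPaths.1 hA'
  obtain rfl : i = i' := hAf.symm.trans hAf'
  obtain rfl : j = j' := by omega
  rfl

lemma exists_glue_eq {m r : ℕ} (hr : 1 ≤ r) {w : List Bool} (hw : w ∈ dyckPaths (m + r) m) :
    ∃ q ∈ gluingData m r, q.glue = w := by
  obtain ⟨hwd, hwf⟩ := mem_dyckPaths.1 hw
  have hpos : ∃ k, 0 < height (w.take k) := by
    by_contra! hneg
    have := (flaws_eq_count_iff w).2 hneg
    rw [hwf, hwd.2] at this
    omega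
  obtain ⟨A, B, C, rfl, hA, hB, hBn, hC⟩ := exists_append_up_down (IsDyck.height_eq_zero hwd) hpos
  have hCh : height C = 0 := by
    have := IsDyck.height_eq_zero hwd
    simp only [height_append, height_cons_true, height_cons_false, hA, hB] at this
    omega
  have hCf : flaws C = C.count true := (flaws_eq_count_iff C).2 hC
  have hflaws := flaws_append_up_down C hA hB hBn
  have hAf := flaws_le_count A
  have hcount := hwd.2
  simp only [List.count_append, List.count_cons_self, List.count_cons_of_ne Bool.false_ne_true]
    at hcount
  have hBd := isDyck_count_of_height_eq_zero hB
  refine ⟨⟨(flaws A, A.count true - flaws A), C, B.map not, A⟩,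
    mem_gluingData.2 ⟨by omega, by omega, ?_, ?_, ?_⟩,
    by simp [GluingDatum.glue, Function.comp_def]⟩
  · rw [show m - flaws A = C.count true by omega, mem_dyckPaths_self]
    exact ⟨isDyck_count_of_height_eq_zero hCh, hC⟩
  · rw [show r - 1 - (A.count true - flaws A) = B.count true by omega, mem_dyckPaths_self,
      isDyck_iff_length_height, List.length_map, height_map_not, hB, neg_zero]
    exact ⟨⟨hBd.1, rfl⟩, staysNonpos_map_not.2 hBn⟩
  · rw [Nat.add_sub_cancel' hAf]
    exact mem_dyckPaths.2 ⟨isDyck_count_of_height_eq_zero hA, rfl⟩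

lemma image_glue_gluingData {m r : ℕ} (hr : 1 ≤ r) :
    (gluingData m r).image GluingDatum.glue = dyckPaths (m + r) m := by
  ext w
  simp only [mem_image]
  exact ⟨fun ⟨q, hq, hqw⟩ => hqw ▸ glue_mem_dyckPaths hq, exists_glue_eq hr⟩

lemma Ppoly_mul_Ppoly_mul_Ppoly (a a' b b' c c' : ℕ) :
    Ppoly a a' * Ppoly b b' * Ppoly c c' =
      ∑ q ∈ dyckPaths a a' ×ˢ dyckPaths b b' ×ˢ dyckPaths c c',
        (Polynomial.X : Polynomial ℤ) ^ (peaks q.1 + peaks q.2.1 + peaks q.2.2) := by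
  rw [mul_assoc, Ppoly_eq_sum, Ppoly_eq_sum, Ppoly_eq_sum, sum_mul_sum, sum_mul_sum]
  simp only [mul_sum, sum_product, pow_add, mul_assoc]

end DyckPath

/-- The recurrence
`P_{m+r,m}(x) = x Σ_{i=0}^{m} Σ_{j=0}^{r-1} P_{m-i,m-i}(x) P_{r-1-j,r-1-j}(x) P_{i+j,i}(x)`
for `r ≥ 1`. -/
theorem peak_poly_recurrence (m r : ℕ) (hr : 1 ≤ r) :
    Ppoly (m + r) m =
      Polynomial.X * ∑ i ∈ Finset.range (m + 1), ∑ j ∈ Finset.range r,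
        Ppoly (m - i) (m - i) * Ppoly (r - 1 - j) (r - 1 - j) * Ppoly (i + j) i := by
  open DyckPath Finset in
  calc Ppoly (m + r) m
      = ∑ q ∈ gluingData m r, Polynomial.X ^ peaks q.glue := by
        rw [Ppoly_eq_sum, ← image_glue_gluingData hr, sum_image (glue_injOn m r)]
    _ = ∑ q ∈ gluingData m r,
          Polynomial.X * Polynomial.X ^ (peaks q.2.1 + peaks q.2.2.1 + peaks q.2.2.2) :=
        sum_congr rfl fun q _ => by rw [q.peaks_glue, pow_succ']
    _ = _ := by
        simp only [gluingData, sum_sigma, ← mul_sum, sum_product, Ppoly_mul_Ppoly_mul_Ppoly]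
end
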